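/- Let n be a positive natural number, A an n×n complex Hermitian matrix, a ∈ ℂⁿ, and c, υ, ρ ∈ ℝ with υ ≥ 0. If the (n+1)×(n+1) Hermitian block matrix M = [[υ·Iₙ + A, a], [aᴴ, c − υ·ρ²]] is positive semidefinite, then for every x ∈ ℂⁿ with ‖x‖ ≤ ρ one has Re(xᴴAx) + 2·Re(aᴴx) + c ≥ 0 (the quantity xᴴAx is real since A is Hermitian). -/

import Mathlib

open Matrix
open scoped ComplexOrder

/-- Sufficiency direction of the 𝒮-procedure LMI: if the block matrix
`[[υ·I + A, a], [aᴴ, c − υ·ρ²]]` is positive semidefinite (with `υ ≥ 0` and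
`A` Hermitian), then the quadratic form `Re(xᴴAx) + 2·Re(aᴴx) + c` is
nonnegative for every `x` with `‖x‖ ≤ ρ`. -/
theorem s_procedure_lmi_sufficiency
    (n : ℕ) (hn : 0 < n)
    (A : Matrix (Fin n) (Fin n) ℂ) (hA : A.IsHermitian)
    (a : Fin n → ℂ) (c υ ρ : ℝ) (hυ : 0 ≤ υ)
    (hM : (Matrix.fromBlocks
        (υ • (1 : Matrix (Fin n) (Fin n) ℂ) + A)
        (Matrix.of fun i (_ : Unit) => a i)
        (Matrix.of fun (_ : Unit) j => (starRingEnd ℂ) (a j))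
        (Matrix.of fun (_ : Unit) (_ : Unit) => ((c - υ * ρ ^ 2 : ℝ) : ℂ))).PosSemidef) :
    ∀ x : EuclideanSpace ℂ (Fin n), ‖x‖ ≤ ρ →
      0 ≤ (star x ⬝ᵥ A.mulVec x).re + 2 * (star a ⬝ᵥ (x : Fin n → ℂ)).re + c := by
  intro x hx
  set y : Fin n ⊕ Unit → ℂ := Sum.elim (x : Fin n → ℂ) (fun _ => 1) with hy
  have h := hM.dotProduct_mulVec_nonneg y
  have hsy : star y = Sum.elim (star (x : Fin n → ℂ)) (fun _ => 1) := by
    funext i; cases i <;> simp [hy]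
  rw [fromBlocks_mulVec, hsy] at h
  have hcomp1 : y ∘ Sum.inl = (x : Fin n → ℂ) := rfl
  have hcomp2 : y ∘ Sum.inr = fun _ => (1 : ℂ) := rfl
  rw [hcomp1, hcomp2, sumElim_dotProduct_sumElim] at h
  -- simplify the pieces
  have hB : (Matrix.of fun i (_ : Unit) => a i) *ᵥ (fun _ => (1 : ℂ)) = a := by
    funext i; simp [mulVec, dotProduct]
  have hC : (Matrix.of fun (_ : Unit) j => (starRingEnd ℂ) (a j)) *ᵥ (x : Fin n → ℂ)
      = fun _ => star a ⬝ᵥ (x : Fin n → ℂ) := by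
    funext u; simp [mulVec, dotProduct]
  have hD : (Matrix.of fun (_ : Unit) (_ : Unit) => ((c - υ * ρ ^ 2 : ℝ) : ℂ)) *ᵥ
      (fun _ => (1 : ℂ)) = fun _ => ((c - υ * ρ ^ 2 : ℝ) : ℂ) := by
    funext u; simp [mulVec, dotProduct]
  rw [hB, hC, hD] at h
  have h0 : (0 : ℝ) ≤ (star (x : Fin n → ℂ) ⬝ᵥ
      (((υ • (1 : Matrix (Fin n) (Fin n) ℂ) + A)) *ᵥ (x : Fin n → ℂ) + a)
      + (fun _ : Unit => (1 : ℂ)) ⬝ᵥ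
        ((fun _ : Unit => star a ⬝ᵥ (x : Fin n → ℂ))
          + fun _ : Unit => ((c - υ * ρ ^ 2 : ℝ) : ℂ))).re := by
    exact (Complex.le_def.mp h).1
  have hxa : (star (x : Fin n → ℂ) ⬝ᵥ a).re = (star a ⬝ᵥ (x : Fin n → ℂ)).re := by
    have : star (x : Fin n → ℂ) ⬝ᵥ a = star (star a ⬝ᵥ (x : Fin n → ℂ)) := by
      simp [dotProduct, Finset.sum_comm, mul_comm]
    rw [this, Complex.star_def, Complex.conj_re]
  have hnorm : (star (x : Fin n → ℂ) ⬝ᵥ (x : Fin n → ℂ)).re = ‖x‖ ^ 2 := by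
    have h1 := inner_self_eq_norm_sq (𝕜 := ℂ) x
    rw [EuclideanSpace.inner_eq_star_dotProduct] at h1
    simpa [dotProduct_comm] using h1
  have hU : (fun _ : Unit => (1 : ℂ)) ⬝ᵥ ((fun _ : Unit => star a ⬝ᵥ (x : Fin n → ℂ))
      + fun _ : Unit => ((c - υ * ρ ^ 2 : ℝ) : ℂ))
      = star a ⬝ᵥ (x : Fin n → ℂ) + ((c - υ * ρ ^ 2 : ℝ) : ℂ) := by
    simp [dotProduct]
  rw [hU, add_mulVec, smul_mulVec, one_mulVec, dotProduct_add, dotProduct_add, dotProduct_smul] at h0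
  simp only [Complex.add_re, Complex.real_smul, Complex.mul_re, Complex.ofReal_re,
    Complex.ofReal_im, zero_mul, sub_zero, hnorm, hxa] at h0
  have hρ : υ * ‖x‖ ^ 2 ≤ υ * ρ ^ 2 := by
    apply mul_le_mul_of_nonneg_left _ hυ
    have := norm_nonneg x
    nlinarith
  linarith
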